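/- Let n = 3 and let z ∈ ℂ with |z| = 1, Im z ≠ 0, and arg z ∉ [−π/2, π/2]. Define K_z(x) = (z/|x|²)^{1/4} · K_{1/2}(z^{1/2}|x|), K₂ = K_z · 1_{{x : |x| > 1}}, and K_{2,j} = β_j K₂ for j ≥ 1, where β_j(x) = η(2^{−j}x) − η(2^{−j+1}x) for a fixed smooth η supported in {|x|<1} with η = 1 on {|x|<1/2}. Then there exists a constant C (uniform in z and j) such that both ‖K_{2,j} ∗ u‖_{L^∞(ℝ³)} ≤ C·2^{2j} ‖u‖_{L^∞(ℝ³)} and ‖K_{2,j} ∗ u‖_{L^∞(ℝ³)} ≤ C·2^{−j} ‖u‖_{L^1(ℝ³)} hold for all u. -/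

import Mathlib

open MeasureTheory Complex ENNReal

noncomputable section

/-- The modified Bessel function of the second kind,
`K_ν(w) = ∫₀^∞ e^{-w cosh t} cosh(ν t) dt`, for `Re w > 0`. -/
def besselK (ν w : ℂ) : ℂ :=
  ∫ t in Set.Ioi (0 : ℝ), Complex.exp (-w * Real.cosh t) * Complex.cosh (ν * t)

/-- The resolvent kernel `K_z(x) = (z/|x|²)^{(n-2)/4} K_{(n-2)/2}(z^{1/2}|x|)`, the inverse
Fourier transform of `ξ ↦ 1/(-|ξ|² + z)`, with principal branches of the complex powers. -/
def resolventKernel (n : ℕ) (z : ℂ) (x : EuclideanSpace ℝ (Fin n)) : ℂ :=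
  (z / ((‖x‖ : ℂ)) ^ 2) ^ (((n : ℂ) - 2) / 4) *
    besselK (((n : ℂ) - 2) / 2) (z ^ ((1 : ℂ) / 2) * (‖x‖ : ℂ))

/-- The dyadic cutoff `β_j(x) = η(2^{-j}x) - η(2^{-j+1}x)`. -/
def dyadicCutoff {n : ℕ} (η : EuclideanSpace ℝ (Fin n) → ℝ) (j : ℕ)
    (x : EuclideanSpace ℝ (Fin n)) : ℝ :=
  η (((2 : ℝ) ^ (-(j : ℤ))) • x) - η (((2 : ℝ) ^ (1 - (j : ℤ))) • x)

/-! ### Auxiliary lemmas -/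

lemma image_sinh_half_Ioi : (fun t : ℝ => Real.sinh (t / 2)) '' Set.Ioi 0 = Set.Ioi 0 := by
  ext u
  constructor
  · rintro ⟨t, ht, rfl⟩
    exact Real.sinh_pos_iff.mpr (by linarith [Set.mem_Ioi.mp ht])
  · intro hu
    refine ⟨2 * Real.arsinh u, ?_, ?_⟩
    · have := Real.arsinh_pos_iff.mpr (Set.mem_Ioi.mp hu)
      exact Set.mem_Ioi.mpr (by linarith)
    · show Real.sinh (2 * Real.arsinh u / 2) = u
      rw [show 2 * Real.arsinh u / 2 = Real.arsinh u by ring, Real.sinh_arsinh]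

/-- Closed form for `K_{1/2}`. -/
lemma besselK_half_eq {w : ℂ} (hw : 0 < w.re) :
    besselK (1 / 2) w = Complex.exp (-w) * (((Real.pi : ℂ)) / (2 * w)) ^ (1 / 2 : ℂ) := by
  have hderiv : ∀ t ∈ Set.Ioi (0 : ℝ), HasDerivWithinAt (fun t : ℝ => Real.sinh (t / 2))
      (Real.cosh (t / 2) * (1 / 2)) (Set.Ioi 0) t := by
    intro t _
    have := (Real.hasDerivAt_sinh (t / 2)).comp t ((hasDerivAt_id t).div_const 2)
    exact this.hasDerivWithinAt
  have hinj : Set.InjOn (fun t : ℝ => Real.sinh (t / 2)) (Set.Ioi 0) := by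
    intro a _ b _ h
    have := Real.sinh_injective h
    linarith
  have key : ∀ t : ℝ, Complex.exp (-w * Real.cosh t) * Complex.cosh ((1 / 2 : ℂ) * t)
      = |Real.cosh (t / 2) * (1 / 2)| •
        ((fun u : ℝ => 2 * Complex.exp (-w * (1 + 2 * (u : ℂ) ^ 2))) (Real.sinh (t / 2))) := by
    intro t
    have hcosh : (Real.cosh t : ℂ) = 1 + 2 * (Real.sinh (t / 2) : ℂ) ^ 2 := by
      have h : Real.cosh t = 1 + 2 * Real.sinh (t / 2) ^ 2 := by
        have h2 : t = 2 * (t / 2) := by ring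
        rw [h2, Real.cosh_two_mul, Real.cosh_sq']
        ring
      rw [h]; push_cast; ring
    have hch : Complex.cosh ((1 / 2 : ℂ) * t) = ((Real.cosh (t / 2) : ℝ) : ℂ) := by
      rw [Complex.ofReal_cosh]
      norm_num
      push_cast
      ring_nf
    have habs : |Real.cosh (t / 2) * (1 / 2)| = Real.cosh (t / 2) * (1 / 2) :=
      abs_of_pos (by positivity)
    rw [hch, habs, hcosh]
    simp only [Complex.real_smul]
    push_cast
    ring
  have h2w : 0 < (2 * w).re := by
    simp only [Complex.mul_re]
    norm_num
    linarith
  unfold besselK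
  calc (∫ t in Set.Ioi (0 : ℝ), Complex.exp (-w * Real.cosh t) * Complex.cosh ((1 / 2 : ℂ) * t))
      = ∫ t in Set.Ioi (0 : ℝ), |Real.cosh (t / 2) * (1 / 2)| •
          ((fun u : ℝ => 2 * Complex.exp (-w * (1 + 2 * (u : ℂ) ^ 2))) (Real.sinh (t / 2))) :=
        integral_congr_ae (Filter.Eventually.of_forall key)
    _ = ∫ u in (fun t : ℝ => Real.sinh (t / 2)) '' Set.Ioi 0,
          2 * Complex.exp (-w * (1 + 2 * (u : ℂ) ^ 2)) :=
        (integral_image_eq_integral_abs_deriv_smul measurableSet_Ioi hderiv hinj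
          (fun u : ℝ => 2 * Complex.exp (-w * (1 + 2 * (u : ℂ) ^ 2)))).symm
    _ = ∫ u in Set.Ioi (0 : ℝ), 2 * Complex.exp (-w * (1 + 2 * (u : ℂ) ^ 2)) := by
        rw [image_sinh_half_Ioi]
    _ = ∫ u in Set.Ioi (0 : ℝ), (2 * Complex.exp (-w)) * Complex.exp (-(2 * w) * (u : ℂ) ^ 2) := by
        refine integral_congr_ae (Filter.Eventually.of_forall fun u => ?_)
        dsimp only
        rw [mul_assoc, ← Complex.exp_add]
        congr 2
        ring
    _ = (2 * Complex.exp (-w)) * ∫ u in Set.Ioi (0 : ℝ), Complex.exp (-(2 * w) * (u : ℂ) ^ 2) :=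
        integral_const_mul _ _
    _ = Complex.exp (-w) * (((Real.pi : ℂ)) / (2 * w)) ^ (1 / 2 : ℂ) := by
        rw [integral_gaussian_complex_Ioi h2w]
        ring

lemma abs_besselK_half_le {w : ℂ} (hw : 0 < w.re) :
    ‖besselK (1 / 2) w‖ ≤
      (Real.pi / 2) ^ ((2 : ℝ)⁻¹) * (‖w‖) ^ (-(2 : ℝ)⁻¹) := by
  have hw0 : w ≠ 0 := fun h => by simp [h] at hw
  have habsw : 0 < ‖w‖ := norm_pos_iff.mpr hw0
  rw [besselK_half_eq hw, norm_mul]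
  have h1 : ‖Complex.exp (-w)‖ ≤ 1 := by
    rw [Complex.norm_exp]
    refine Real.exp_le_one_iff.mpr ?_
    simp only [Complex.neg_re]
    linarith
  have hbase : ((Real.pi : ℂ) / (2 * w)) ≠ 0 :=
    div_ne_zero (by exact_mod_cast Real.pi_ne_zero) (by simp [hw0])
  have h2 : ‖((Real.pi : ℂ) / (2 * w)) ^ (1 / 2 : ℂ)‖
      = (Real.pi / (2 * ‖w‖)) ^ ((2 : ℝ)⁻¹) := by
    rw [Complex.norm_cpow_of_ne_zero hbase]
    have : ((1 : ℂ) / 2).im = 0 := by norm_num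
    rw [this, mul_zero, Real.exp_zero, div_one]
    have : ((1 : ℂ) / 2).re = (2 : ℝ)⁻¹ := by norm_num
    rw [this]
    congr 1
    simp [norm_div, norm_mul, Complex.norm_real, abs_of_pos Real.pi_pos]
  have h3 : (Real.pi / (2 * ‖w‖)) ^ ((2 : ℝ)⁻¹)
      = (Real.pi / 2) ^ ((2 : ℝ)⁻¹) * (‖w‖) ^ (-(2 : ℝ)⁻¹) := by
    have hrw : Real.pi / (2 * ‖w‖) = (Real.pi / 2) * (‖w‖)⁻¹ := by
      field_simp
    rw [hrw, Real.mul_rpow (by positivity) (by positivity),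
      Real.inv_rpow habsw.le, ← Real.rpow_neg habsw.le]
  rw [h2, h3]
  calc ‖Complex.exp (-w)‖ * ((Real.pi / 2) ^ ((2 : ℝ)⁻¹) * (‖w‖) ^ (-(2 : ℝ)⁻¹))
      ≤ 1 * ((Real.pi / 2) ^ ((2 : ℝ)⁻¹) * (‖w‖) ^ (-(2 : ℝ)⁻¹)) := by
        refine mul_le_mul_of_nonneg_right h1 (by positivity)
    _ = (Real.pi / 2) ^ ((2 : ℝ)⁻¹) * (‖w‖) ^ (-(2 : ℝ)⁻¹) := one_mul _

lemma abs_resolventKernel_le {z : ℂ} (hz : ‖z‖ = 1) (him : z.im ≠ 0)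
    {x : EuclideanSpace ℝ (Fin 3)} (hx : 0 < ‖x‖) :
    ‖resolventKernel 3 z x‖ ≤ (Real.pi / 2) ^ ((2 : ℝ)⁻¹) / ‖x‖ := by
  set r : ℝ := ‖x‖ with hr
  have hz0 : z ≠ 0 := by
    intro h; rw [h] at hz; simp at hz
  have harg : |z.arg| < Real.pi := by
    rw [abs_lt]
    refine ⟨Complex.neg_pi_lt_arg z, lt_of_le_of_ne (Complex.arg_le_pi z) ?_⟩
    intro h
    exact him (Complex.arg_eq_pi_iff.mp h).2
  have hsre : 0 < (z ^ ((1 : ℂ) / 2)).re := by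
    rw [Complex.cpow_def_of_ne_zero hz0, Complex.exp_re]
    have him2 : (Complex.log z * ((1 : ℂ) / 2)).im = z.arg / 2 := by
      simp [Complex.mul_im, Complex.log_im]
      ring
    rw [him2]
    have hcos : 0 < Real.cos (z.arg / 2) := by
      refine Real.cos_pos_of_mem_Ioo ⟨?_, ?_⟩
      · have := abs_lt.mp harg
        linarith [this.1]
      · have := abs_lt.mp harg
        linarith [this.2]
    positivity
  have habs_s : ‖z ^ ((1 : ℂ) / 2)‖ = 1 := by
    rw [Complex.norm_cpow_of_ne_zero hz0, hz]
    simp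
  set w : ℂ := z ^ ((1 : ℂ) / 2) * (r : ℂ) with hw
  have hwre : 0 < w.re := by
    have : w.re = (z ^ ((1 : ℂ) / 2)).re * r := by
      simp [hw, Complex.mul_re]
    rw [this]
    exact mul_pos hsre hx
  have habsw : ‖w‖ = r := by
    rw [hw, norm_mul, habs_s, one_mul, Complex.norm_real, Real.norm_eq_abs, abs_of_pos hx]
  have hbK := abs_besselK_half_le hwre
  rw [habsw] at hbK
  have hr2 : ((r : ℂ)) ^ 2 ≠ 0 := pow_ne_zero _ (by exact_mod_cast hx.ne')
  have hb0 : z / ((r : ℂ)) ^ 2 ≠ 0 := div_ne_zero hz0 hr2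
  have hexp4 : (((3 : ℕ) : ℂ) - 2) / 4 = ((4 : ℝ)⁻¹ : ℂ) := by norm_num
  have hexp2 : (((3 : ℕ) : ℂ) - 2) / 2 = 1 / 2 := by norm_num
  have habs1 : ‖(z / ((r : ℂ)) ^ 2) ^ (((4 : ℝ)⁻¹ : ℂ))‖ = r ^ (-(2 : ℝ)⁻¹) := by
    rw [Complex.norm_cpow_of_ne_zero hb0]
    have him4 : (((4 : ℝ)⁻¹ : ℂ)).im = 0 := by norm_num
    have hre4 : (((4 : ℝ)⁻¹ : ℂ)).re = (4 : ℝ)⁻¹ := by norm_num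
    rw [him4, mul_zero, Real.exp_zero, div_one, hre4]
    have habsb : ‖z / ((r : ℂ)) ^ 2‖ = (r ^ (2 : ℕ))⁻¹ := by
      rw [norm_div, hz, norm_pow, Complex.norm_real, Real.norm_eq_abs, abs_of_pos hx, one_div]
    rw [habsb, ← Real.rpow_natCast r 2, ← Real.rpow_neg hx.le, ← Real.rpow_mul hx.le]
    norm_num
  unfold resolventKernel
  rw [hexp4, hexp2, norm_mul, habs1]
  calc r ^ (-(2 : ℝ)⁻¹) * ‖besselK (1 / 2) w‖
      ≤ r ^ (-(2 : ℝ)⁻¹) * ((Real.pi / 2) ^ ((2 : ℝ)⁻¹) * r ^ (-(2 : ℝ)⁻¹)) :=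
        mul_le_mul_of_nonneg_left hbK (by positivity)
    _ = (Real.pi / 2) ^ ((2 : ℝ)⁻¹) * (r ^ (-(2 : ℝ)⁻¹) * r ^ (-(2 : ℝ)⁻¹)) := by ring
    _ = (Real.pi / 2) ^ ((2 : ℝ)⁻¹) / r := by
        rw [← Real.rpow_add hx]
        norm_num
        rw [Real.rpow_neg_one]
        rfl

/-- For `n = 3`, `|z| = 1`, `Im z ≠ 0`, `arg z ∉ [-π/2, π/2]`, the dyadic pieces
`K_{2,j} = β_j K₂` of the outer resolvent kernel satisfy both
`‖K_{2,j} ∗ u‖_{L^∞} ≤ C 2^{2j} ‖u‖_{L^∞}` and `‖K_{2,j} ∗ u‖_{L^∞} ≤ C 2^{-j} ‖u‖_{L^1}`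
with `C` uniform in `z` and `j`. -/
theorem dyadic_piece_bounds_dim_three
    (η : EuclideanSpace ℝ (Fin 3) → ℝ) (hηsm : ContDiff ℝ (⊤ : ℕ∞) η)
    (hηsupp : ∀ x, η x ≠ 0 → ‖x‖ < 1) (hηone : ∀ x, ‖x‖ < 1 / 2 → η x = 1) :
    ∃ C : ℝ, 0 < C ∧ ∀ z : ℂ, ‖z‖ = 1 → z.im ≠ 0 →
      z.arg ∉ Set.Icc (-(Real.pi / 2)) (Real.pi / 2) →
      ∀ j : ℕ, 1 ≤ j →
      ∀ u : EuclideanSpace ℝ (Fin 3) → ℂ, AEStronglyMeasurable u volume →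
        (eLpNorm
          (convolution
            (fun x => (dyadicCutoff η j x : ℂ) *
              Set.indicator {y : EuclideanSpace ℝ (Fin 3) | 1 < ‖y‖} (resolventKernel 3 z) x)
            u (ContinuousLinearMap.mul ℂ ℂ) volume)
          ⊤ volume ≤
          ENNReal.ofReal (C * 2 ^ (2 * (j : ℝ))) * eLpNorm u ⊤ volume) ∧
        (eLpNorm
          (convolution
            (fun x => (dyadicCutoff η j x : ℂ) *
              Set.indicator {y : EuclideanSpace ℝ (Fin 3) | 1 < ‖y‖} (resolventKernel 3 z) x)
            u (ContinuousLinearMap.mul ℂ ℂ) volume)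
          ⊤ volume ≤
          ENNReal.ofReal (C * 2 ^ (-(j : ℝ))) * eLpNorm u 1 volume) := by
  classical
  -- a uniform bound for η
  have hηcs : HasCompactSupport η := by
    refine HasCompactSupport.intro (isCompact_closedBall (0 : EuclideanSpace ℝ (Fin 3)) 1) ?_
    intro y hy
    by_contra h
    exact hy (Metric.mem_closedBall.mpr (by simpa [dist_zero_right] using (hηsupp y h).le))
  obtain ⟨M, hM⟩ := hηcs.exists_bound_of_continuous hηsm.continuous
  have hM0 : 0 ≤ M := le_trans (norm_nonneg _) (hM 0)
  set B : ℝ := (Real.pi / 2) ^ ((2 : ℝ)⁻¹) with hB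
  have hB0 : 0 < B := by positivity
  set V : ℝ := (volume (Metric.ball (0 : EuclideanSpace ℝ (Fin 3)) 1)).toReal with hV
  have hV0 : 0 ≤ V := ENNReal.toReal_nonneg
  set P : ℝ := (2 * M) * B * 4 with hP
  have hP0 : 0 ≤ P := by positivity
  refine ⟨P * (V + 1) + 1, by positivity, ?_⟩
  intro z hz1 him _harg j _hj u hu
  set C : ℝ := P * (V + 1) + 1 with hC
  have hC0 : 0 < C := by positivity
  set KK : EuclideanSpace ℝ (Fin 3) → ℂ := fun x => (dyadicCutoff η j x : ℂ) *
      Set.indicator {y : EuclideanSpace ℝ (Fin 3) | 1 < ‖y‖} (resolventKernel 3 z) x with hKK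
  set D : ℝ := P * ((2 : ℝ) ^ j)⁻¹ with hD
  have h2j : (0 : ℝ) < (2 : ℝ) ^ j := by positivity
  have hD0 : 0 ≤ D := by positivity
  -- norms of the dilates
  have hnorm1 : ∀ t : EuclideanSpace ℝ (Fin 3), ‖((2 : ℝ) ^ (-(j : ℤ))) • t‖ = ((2 : ℝ) ^ j)⁻¹ * ‖t‖ := by
    intro t
    rw [norm_smul, Real.norm_eq_abs, abs_of_pos (a := (2:ℝ) ^ (-(j:ℤ))) (by positivity), zpow_neg,
      zpow_natCast]
  have hnorm2 : ∀ t : EuclideanSpace ℝ (Fin 3), ‖((2 : ℝ) ^ (1 - (j : ℤ))) • t‖ = 2 * ((2 : ℝ) ^ j)⁻¹ * ‖t‖ := by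
    intro t
    rw [norm_smul, Real.norm_eq_abs, abs_of_pos (a := (2:ℝ) ^ (1-(j:ℤ))) (by positivity),
      zpow_sub₀ (by norm_num : (2 : ℝ) ≠ 0), zpow_one, zpow_natCast]
    ring
  -- support facts
  have hsupp_low : ∀ t : EuclideanSpace ℝ (Fin 3), dyadicCutoff η j t ≠ 0 → (2 : ℝ) ^ j / 4 ≤ ‖t‖ := by
    intro t hβ
    by_contra h
    push_neg at h
    apply hβ
    have e1 : η (((2 : ℝ) ^ (-(j : ℤ))) • t) = 1 := by
      refine hηone _ ?_
      rw [hnorm1 t]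
      calc ((2 : ℝ) ^ j)⁻¹ * ‖t‖ < ((2 : ℝ) ^ j)⁻¹ * ((2 : ℝ) ^ j / 4) := by
            refine mul_lt_mul_of_pos_left h (by positivity)
        _ = 1 / 4 := by field_simp
        _ < 1 / 2 := by norm_num
    have e2 : η (((2 : ℝ) ^ (1 - (j : ℤ))) • t) = 1 := by
      refine hηone _ ?_
      rw [hnorm2 t]
      calc 2 * ((2 : ℝ) ^ j)⁻¹ * ‖t‖ < 2 * ((2 : ℝ) ^ j)⁻¹ * ((2 : ℝ) ^ j / 4) := by
            refine mul_lt_mul_of_pos_left ?_ (by positivity)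
            exact h
        _ = 1 / 2 := by field_simp; ring
    rw [dyadicCutoff, e1, e2, sub_self]
  have hsupp_high : ∀ t : EuclideanSpace ℝ (Fin 3), (2 : ℝ) ^ j < ‖t‖ → dyadicCutoff η j t = 0 := by
    intro t ht
    have e1 : η (((2 : ℝ) ^ (-(j : ℤ))) • t) = 0 := by
      by_contra h
      have hlt := hηsupp _ h
      rw [hnorm1 t] at hlt
      have h3 := mul_lt_mul_of_pos_left hlt h2j
      rw [← mul_assoc, mul_inv_cancel₀ (ne_of_gt h2j), one_mul, mul_one] at h3
      linarith
    have e2 : η (((2 : ℝ) ^ (1 - (j : ℤ))) • t) = 0 := by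
      by_contra h
      have hlt := hηsupp _ h
      rw [hnorm2 t] at hlt
      have h3 := mul_lt_mul_of_pos_left hlt h2j
      have h4 : (2:ℝ) ^ j * (2 * ((2:ℝ) ^ j)⁻¹ * ‖t‖) = 2 * ‖t‖ := by
        field_simp
      rw [h4, mul_one] at h3
      linarith
    rw [dyadicCutoff, e1, e2, sub_self]
  -- pointwise bound on the kernel
  have h1 : ∀ t : EuclideanSpace ℝ (Fin 3), ‖KK t‖ ≤ D := by
    intro t
    by_cases hβ : dyadicCutoff η j t = 0
    · simp [hKK, hβ, hD0]
    · by_cases hmem : t ∈ {y : EuclideanSpace ℝ (Fin 3) | 1 < ‖y‖}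
      · have ht1 : (1 : ℝ) < ‖t‖ := hmem
        have htlow := hsupp_low t hβ
        have htpos : (0 : ℝ) < ‖t‖ := by linarith
        have hkb := abs_resolventKernel_le hz1 him htpos
        have hβb : |dyadicCutoff η j t| ≤ 2 * M := by
          rw [dyadicCutoff]
          calc |η (((2 : ℝ) ^ (-(j : ℤ))) • t) - η (((2 : ℝ) ^ (1 - (j : ℤ))) • t)|
              ≤ |η (((2 : ℝ) ^ (-(j : ℤ))) • t)| + |η (((2 : ℝ) ^ (1 - (j : ℤ))) • t)| :=
                abs_sub _ _
            _ ≤ M + M := add_le_add (hM _) (hM _)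
            _ = 2 * M := by ring
        have hkb2 : ‖resolventKernel 3 z t‖ ≤ B * 4 * ((2 : ℝ) ^ j)⁻¹ := by
          refine le_trans hkb ?_
          rw [div_le_iff₀ htpos]
          have h4 : (2 : ℝ) ^ j / 4 * (B * 4 * ((2 : ℝ) ^ j)⁻¹) = B := by
            field_simp
          calc B = (2 : ℝ) ^ j / 4 * (B * 4 * ((2 : ℝ) ^ j)⁻¹) := h4.symm
            _ ≤ B * 4 * ((2 : ℝ) ^ j)⁻¹ * ‖t‖ := by
                rw [mul_comm]
                refine mul_le_mul_of_nonneg_left htlow (by positivity)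
        calc ‖KK t‖ = |dyadicCutoff η j t| * ‖resolventKernel 3 z t‖ := by
              rw [hKK]
              simp only [Set.indicator_of_mem hmem]
              rw [norm_mul, Complex.norm_real, Real.norm_eq_abs]
          _ ≤ (2 * M) * (B * 4 * ((2 : ℝ) ^ j)⁻¹) := by
              refine mul_le_mul hβb hkb2 (by positivity) (by linarith)
          _ = D := by rw [hD, hP]; ring
      · simp [hKK, Set.indicator_of_notMem hmem, hD0]
  have h2 : ∀ t : EuclideanSpace ℝ (Fin 3), (2 : ℝ) ^ j < ‖t‖ → KK t = 0 := by
    intro t ht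
    rw [hKK]
    simp [hsupp_high t ht]
  -- L¹ bound of the kernel
  have hvol_ne : volume (Metric.ball (0 : EuclideanSpace ℝ (Fin 3)) 1) ≠ ⊤ := measure_ball_lt_top.ne
  have hK1 : (∫⁻ t, (‖KK t‖₊ : ℝ≥0∞) ∂volume) ≤ ENNReal.ofReal (C * 2 ^ (2 * (j : ℝ))) := by
    have step : ∀ t, (‖KK t‖₊ : ℝ≥0∞) ≤
        (Metric.closedBall (0 : EuclideanSpace ℝ (Fin 3)) ((2 : ℝ) ^ j)).indicator (fun _ => ENNReal.ofReal D) t := by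
      intro t
      by_cases ht : t ∈ Metric.closedBall (0 : EuclideanSpace ℝ (Fin 3)) ((2 : ℝ) ^ j)
      · rw [Set.indicator_of_mem ht, ← enorm_eq_nnnorm, ← ofReal_norm]
        exact ENNReal.ofReal_le_ofReal (h1 t)
      · rw [Set.indicator_of_notMem ht]
        have htn : (2 : ℝ) ^ j < ‖t‖ := by
          simpa [Metric.mem_closedBall, dist_zero_right, not_le] using ht
        simp [h2 t htn]
    have hrw : volume (Metric.closedBall (0 : EuclideanSpace ℝ (Fin 3)) ((2 : ℝ) ^ j))
        = ENNReal.ofReal (((2 : ℝ) ^ j) ^ 3) * volume (Metric.ball (0 : EuclideanSpace ℝ (Fin 3)) 1) := by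
      rw [Measure.addHaar_closedBall _ _ (le_of_lt h2j)]
      congr 2
      · exact congrArg _ finrank_euclideanSpace_fin
    calc (∫⁻ t, (‖KK t‖₊ : ℝ≥0∞) ∂volume)
        ≤ ∫⁻ t, (Metric.closedBall (0 : EuclideanSpace ℝ (Fin 3)) ((2 : ℝ) ^ j)).indicator
            (fun _ => ENNReal.ofReal D) t ∂volume := lintegral_mono step
      _ = ENNReal.ofReal D * volume (Metric.closedBall (0 : EuclideanSpace ℝ (Fin 3)) ((2 : ℝ) ^ j)) :=
          lintegral_indicator_const Metric.isClosed_closedBall.measurableSet _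
      _ = ENNReal.ofReal D * (ENNReal.ofReal (((2 : ℝ) ^ j) ^ 3) * ENNReal.ofReal V) := by
          rw [hrw, hV, ENNReal.ofReal_toReal hvol_ne]
      _ = ENNReal.ofReal (D * (((2 : ℝ) ^ j) ^ 3 * V)) := by
          rw [← ENNReal.ofReal_mul (by positivity : (0:ℝ) ≤ ((2 : ℝ) ^ j) ^ 3),
            ← ENNReal.ofReal_mul hD0]
      _ ≤ ENNReal.ofReal (C * 2 ^ (2 * (j : ℝ))) := by
          refine ENNReal.ofReal_le_ofReal ?_
          have hpow : (2 : ℝ) ^ (2 * (j : ℝ)) = ((2 : ℝ) ^ j) ^ 2 := by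
            rw [show (2 : ℝ) * (j : ℝ) = ((j * 2 : ℕ) : ℝ) by push_cast; ring,
              Real.rpow_natCast, pow_mul]
          rw [hpow, hD]
          have hcalc : P * ((2 : ℝ) ^ j)⁻¹ * (((2 : ℝ) ^ j) ^ 3 * V)
              = (P * V) * ((2 : ℝ) ^ j) ^ 2 := by
            field_simp
          rw [hcalc, hC]
          refine mul_le_mul_of_nonneg_right ?_ (by positivity)
          nlinarith
  -- L∞ bound of the kernel
  have hDC : D ≤ C * 2 ^ (-(j : ℝ)) := by
    have hpow : (2 : ℝ) ^ (-(j : ℝ)) = ((2 : ℝ) ^ j)⁻¹ := by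
      rw [Real.rpow_neg (by norm_num), Real.rpow_natCast]
    rw [hpow, hD]
    refine mul_le_mul_of_nonneg_right ?_ (by positivity)
    rw [hC]
    nlinarith
  -- pointwise bound for the convolution against the product lintegral
  have hptwise : ∀ x : EuclideanSpace ℝ (Fin 3), (‖convolution KK u (ContinuousLinearMap.mul ℂ ℂ) volume x‖₊ : ℝ≥0∞)
      ≤ ∫⁻ t, (‖KK t‖₊ : ℝ≥0∞) * (‖u (x - t)‖₊ : ℝ≥0∞) ∂volume := by
    intro x
    rw [convolution_def]
    refine le_trans (enorm_integral_le_lintegral_enorm _) (le_of_eq ?_)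
    refine lintegral_congr fun t => ?_
    rw [ContinuousLinearMap.mul_apply', enorm_mul, enorm_eq_nnnorm, enorm_eq_nnnorm]
  constructor
  · -- L∞ → L∞ bound
    rcases eq_or_ne (eLpNorm u ⊤ volume) ⊤ with hutop | hutop
    · rw [hutop, ENNReal.mul_top (by simp [hC0]; positivity)]
      exact le_top
    · rw [eLpNorm_exponent_top]
      refine essSup_le_of_ae_le _ (Filter.Eventually.of_forall fun x => ?_)
      have hae : ∀ᵐ t : EuclideanSpace ℝ (Fin 3) ∂volume, (‖u (x - t)‖₊ : ℝ≥0∞) ≤ eLpNormEssSup u volume := by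
        have h0 := enorm_ae_le_eLpNormEssSup u volume
        rw [← Measure.map_sub_left_ae volume x] at h0
        exact Filter.eventually_map.mp h0
      calc (‖convolution KK u (ContinuousLinearMap.mul ℂ ℂ) volume x‖₊ : ℝ≥0∞)
          ≤ ∫⁻ t, (‖KK t‖₊ : ℝ≥0∞) * (‖u (x - t)‖₊ : ℝ≥0∞) ∂volume := hptwise x
        _ ≤ ∫⁻ t, (‖KK t‖₊ : ℝ≥0∞) * eLpNormEssSup u volume ∂volume :=
            lintegral_mono_ae (hae.mono fun t ht => mul_le_mul_right ht _)
        _ = (∫⁻ t, (‖KK t‖₊ : ℝ≥0∞) ∂volume) * eLpNormEssSup u volume :=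
            lintegral_mul_const' _ _ (by rwa [← eLpNorm_exponent_top])
        _ ≤ ENNReal.ofReal (C * 2 ^ (2 * (j : ℝ))) * eLpNorm u ⊤ volume := by
            rw [eLpNorm_exponent_top]
            exact mul_le_mul_left hK1 _
  · -- L¹ → L∞ bound
    rw [eLpNorm_exponent_top]
    refine essSup_le_of_ae_le _ (Filter.Eventually.of_forall fun x => ?_)
    have htrans : (∫⁻ t, (‖u (x - t)‖₊ : ℝ≥0∞) ∂volume) = ∫⁻ y, (‖u y‖₊ : ℝ≥0∞) ∂volume := by
      have hmap : Measure.map (fun t : EuclideanSpace ℝ (Fin 3) => x - t) volume = volume :=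
        Measure.map_sub_left_eq_self volume x
      have := lintegral_map_equiv (μ := volume) (fun y => (‖u y‖₊ : ℝ≥0∞))
        (MeasurableEquiv.subLeft x)
      rw [show ⇑(MeasurableEquiv.subLeft x) = fun t : EuclideanSpace ℝ (Fin 3) => x - t from rfl, hmap] at this
      exact this.symm
    calc (‖convolution KK u (ContinuousLinearMap.mul ℂ ℂ) volume x‖₊ : ℝ≥0∞)
        ≤ ∫⁻ t, (‖KK t‖₊ : ℝ≥0∞) * (‖u (x - t)‖₊ : ℝ≥0∞) ∂volume := hptwise x
      _ ≤ ∫⁻ t, ENNReal.ofReal D * (‖u (x - t)‖₊ : ℝ≥0∞) ∂volume := by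
          refine lintegral_mono fun t => ?_
          refine mul_le_mul_left ?_ _
          rw [← enorm_eq_nnnorm, ← ofReal_norm]
          exact ENNReal.ofReal_le_ofReal (h1 t)
      _ = ENNReal.ofReal D * ∫⁻ t, (‖u (x - t)‖₊ : ℝ≥0∞) ∂volume :=
          lintegral_const_mul' _ _ ENNReal.ofReal_ne_top
      _ = ENNReal.ofReal D * eLpNorm u 1 volume := by
          rw [htrans, eLpNorm_one_eq_lintegral_enorm]; rfl
      _ ≤ ENNReal.ofReal (C * 2 ^ (-(j : ℝ))) * eLpNorm u 1 volume :=
          mul_le_mul_left (ENNReal.ofReal_le_ofReal hDC) _
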